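/- arXiv:1201.1626 — 8 statements merged into one kernel-verified Lean document; each statement's English description precedes it below -/
import Mathlib

section
/- Let β, G be positive C² functions on [p₀,0] satisfying 2βGG'' − β(G')² + β'GG' − 2β''G² − 4k²G² + 4z = 0 for a constant z. Then the substitution M(p) = √(G(p)/β(p))·Ψ(p) transforms the equation βM'' + (3/2)β'M' = k²M into 2βG²Ψ'' + (2βGG' + β'G²)Ψ' − 2zΨ = 0; that is, M solves the former iff Ψ solves the latter. -/
/-!
Put `r = √(G/β)`, so that `G = r²β` near any point of `[p₀, 0]` and `M = rΨ`. Expressing `M', M''`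
and `G', G''` through `r, β, Ψ` and their derivatives (no derivative of the square root is ever
needed), one finds the polynomial identity
`2βG²Ψ'' + (2βGG' + β'G²)Ψ' − 2zΨ = 2r³β² (βM'' + (3/2)β'M' − k²M) − (Ψ/2)·(constraint)`,
and `r, β > 0` turns it into the equivalence.
-/

open Filter Topology

section SecondDerivative

variable {𝕜 : Type*} [NontriviallyNormedField 𝕜] {f g : 𝕜 → 𝕜} {x : 𝕜}

theorem deriv_deriv_mul (hf : ∀ᶠ y in 𝓝 x, DifferentiableAt 𝕜 f y)
    (hf' : DifferentiableAt 𝕜 (deriv f) x) (hg : ∀ᶠ y in 𝓝 x, DifferentiableAt 𝕜 g y)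
    (hg' : DifferentiableAt 𝕜 (deriv g) x) :
    deriv (deriv fun y => f y * g y) x
      = deriv (deriv f) x * g x + 2 * (deriv f x * deriv g x) + f x * deriv (deriv g) x := by
  have h : deriv (fun y => f y * g y) =ᶠ[𝓝 x] fun y => deriv f y * g y + f y * deriv g y := by
    filter_upwards [hf, hg] with y hfy hgy using deriv_fun_mul hfy hgy
  rw [h.deriv_eq, deriv_fun_add (hf'.fun_mul hg.self_of_nhds) (hf.self_of_nhds.fun_mul hg'),
    deriv_fun_mul hf' hg.self_of_nhds, deriv_fun_mul hf.self_of_nhds hg']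
  ring

theorem ContDiffAt.eventually_differentiableAt (h : ContDiffAt 𝕜 2 f x) :
    ∀ᶠ y in 𝓝 x, DifferentiableAt 𝕜 f y :=
  (h.eventually (by simp)).mono fun _ hy => hy.differentiableAt (by norm_num)

theorem ContDiffAt.differentiableAt_deriv (h : ContDiffAt 𝕜 2 f x) :
    DifferentiableAt 𝕜 (deriv f) x :=
  (h.derivWithin (m := 1) (by norm_num)).differentiableAt one_ne_zero

theorem ContDiffAt.deriv_deriv_mul (hf : ContDiffAt 𝕜 2 f x) (hg : ContDiffAt 𝕜 2 g x) :
    deriv (deriv fun y => f y * g y) x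
      = deriv (deriv f) x * g x + 2 * (deriv f x * deriv g x) + f x * deriv (deriv g) x :=
  _root_.deriv_deriv_mul hf.eventually_differentiableAt hf.differentiableAt_deriv
    hg.eventually_differentiableAt hg.differentiableAt_deriv

theorem deriv_mul_self_mul (hf : DifferentiableAt 𝕜 f x) (hg : DifferentiableAt 𝕜 g x) :
    deriv (fun y => f y * f y * g y) x = 2 * f x * deriv f x * g x + f x * f x * deriv g x := by
  rw [deriv_fun_mul (hf.fun_mul hf) hg, deriv_fun_mul hf hf]
  ring

theorem ContDiffAt.deriv_deriv_mul_self_mul (hf : ContDiffAt 𝕜 2 f x) (hg : ContDiffAt 𝕜 2 g x) :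
    deriv (deriv fun y => f y * f y * g y) x
      = (2 * f x * deriv (deriv f) x + 2 * deriv f x ^ 2) * g x
        + 4 * f x * deriv f x * deriv g x + f x * f x * deriv (deriv g) x := by
  have hf₁ := hf.differentiableAt two_ne_zero
  rw [(hf.mul hf).deriv_deriv_mul hg, hf.deriv_deriv_mul hf, deriv_fun_mul hf₁ hf₁]
  ring

end SecondDerivative

theorem eventuallyEq_sqrt_div_mul_sqrt_div_mul {f g : ℝ → ℝ} {x : ℝ} (hf : ContinuousAt f x)
    (hg : ContinuousAt g x) (hfg : 0 < f x / g x) :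
    f =ᶠ[𝓝 x] fun y => √(f y / g y) * √(f y / g y) * g y := by
  have hgx : g x ≠ 0 := fun h => by simp [h] at hfg
  have hfg' : ContinuousAt (fun y => f y / g y) x := hf.div hg hgx
  filter_upwards [continuousAt_const.eventually_lt hfg' hfg] with y hy
  have hgy : g y ≠ 0 := fun h => by simp [h] at hy
  rw [Real.mul_self_sqrt hy.le, div_mul_cancel₀ _ hgy]

theorem substitution_iff {b b₁ b₂ r r₁ r₂ ψ ψ₁ ψ₂ m m₁ m₂ g g₁ g₂ k z : ℝ}
    (hr : r ≠ 0) (hb : b ≠ 0)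
    (hm : m = r * ψ) (hm₁ : m₁ = r₁ * ψ + r * ψ₁) (hm₂ : m₂ = r₂ * ψ + 2 * (r₁ * ψ₁) + r * ψ₂)
    (hg : g = r * r * b) (hg₁ : g₁ = 2 * r * r₁ * b + r * r * b₁)
    (hg₂ : g₂ = (2 * r * r₂ + 2 * r₁ ^ 2) * b + 4 * r * r₁ * b₁ + r * r * b₂)
    (hc : 2 * b * g * g₂ - b * g₁ ^ 2 + b₁ * g * g₁ - 2 * b₂ * g ^ 2 - 4 * k ^ 2 * g ^ 2
      + 4 * z = 0) :
    b * m₂ + 3 / 2 * b₁ * m₁ = k ^ 2 * m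
      ↔ 2 * b * g ^ 2 * ψ₂ + (2 * b * g * g₁ + b₁ * g ^ 2) * ψ₁ - 2 * z * ψ = 0 := by
  subst hm hm₁ hm₂ hg hg₁ hg₂
  have key : 2 * b * (r * r * b) ^ 2 * ψ₂
      + (2 * b * (r * r * b) * (2 * r * r₁ * b + r * r * b₁) + b₁ * (r * r * b) ^ 2) * ψ₁
      - 2 * z * ψ
      = 2 * r ^ 3 * b ^ 2 * (b * (r₂ * ψ + 2 * (r₁ * ψ₁) + r * ψ₂)
        + 3 / 2 * b₁ * (r₁ * ψ + r * ψ₁) - k ^ 2 * (r * ψ)) := by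
    linear_combination (-ψ / 2) * hc
  rw [key, mul_eq_zero, or_iff_right (by positivity), sub_eq_zero]

theorem stmt_3_general (p₀ k z : ℝ) (β G : ℝ → ℝ)
    (hβ : ContDiff ℝ 2 β) (hG : ContDiff ℝ 2 G)
    (hβpos : ∀ p ∈ Set.Icc p₀ 0, 0 < β p)
    (hGpos : ∀ p ∈ Set.Icc p₀ 0, 0 < G p)
    (hconstraint : ∀ p ∈ Set.Icc p₀ 0,
      2 * β p * G p * deriv (deriv G) p - β p * (deriv G p) ^ 2
        + deriv β p * G p * deriv G p - 2 * deriv (deriv β) p * (G p) ^ 2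
        - 4 * k ^ 2 * (G p) ^ 2 + 4 * z = 0)
    (M Ψ : ℝ → ℝ)
    (hΨ2 : Differentiable ℝ Ψ) (hΨ2' : Differentiable ℝ (deriv Ψ))
    (hM : ∀ p, M p = Real.sqrt (G p / β p) * Ψ p) :
    ∀ p ∈ Set.Icc p₀ 0,
      (β p * deriv (deriv M) p + 3 / 2 * deriv β p * deriv M p = k ^ 2 * M p)
        ↔ 2 * β p * (G p) ^ 2 * deriv (deriv Ψ) p
            + (2 * β p * G p * deriv G p + deriv β p * (G p) ^ 2) * deriv Ψ p
            - 2 * z * Ψ p = 0 := by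
  intro p hp
  have hb : β p ≠ 0 := (hβpos p hp).ne'
  have hquot : 0 < G p / β p := div_pos (hGpos p hp) (hβpos p hp)
  set r : ℝ → ℝ := fun q => √(G q / β q)
  have hr : ContDiffAt ℝ 2 r p := (hG.contDiffAt.div hβ.contDiffAt hb).sqrt hquot.ne'
  have hGr : G =ᶠ[𝓝 p] fun q => r q * r q * β q :=
    eventuallyEq_sqrt_div_mul_sqrt_div_mul hG.continuous.continuousAt
      hβ.continuous.continuousAt hquot
  have hMr : M = fun q => r q * Ψ q := funext hM
  refine substitution_iff (r₁ := deriv r p) (r₂ := deriv (deriv r) p)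
    (Real.sqrt_pos.2 hquot).ne' hb (hM p) ?_ ?_ hGr.self_of_nhds ?_ ?_
    (hconstraint p hp)
  · rw [hMr, deriv_fun_mul (hr.differentiableAt two_ne_zero) (hΨ2 p)]
  · rw [hMr, deriv_deriv_mul hr.eventually_differentiableAt hr.differentiableAt_deriv
      (.of_forall hΨ2) (hΨ2' p)]
  · rw [hGr.deriv_eq, deriv_mul_self_mul (hr.differentiableAt two_ne_zero)
      (hβ.differentiable two_ne_zero p)]
  · rw [hGr.deriv.deriv_eq, hr.deriv_deriv_mul_self_mul hβ.contDiffAt]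

/-- Under the constraint `2βGG'' − β(G')² + β'GG' − 2β''G² − 4k²G² + 4z = 0`, the substitution
`M = √(G/β)·Ψ` transforms `βM'' + (3/2)β'M' = k²M` into `2βG²Ψ'' + (2βGG' + β'G²)Ψ' − 2zΨ = 0`. -/
theorem stmt_3 (p₀ k z : ℝ) (hp₀ : p₀ < 0) (hk : 0 < k) (β G : ℝ → ℝ)
    (hβ : ContDiff ℝ 2 β) (hG : ContDiff ℝ 2 G)
    (hβpos : ∀ p ∈ Set.Icc p₀ 0, 0 < β p)
    (hGpos : ∀ p ∈ Set.Icc p₀ 0, 0 < G p)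
    (hconstraint : ∀ p ∈ Set.Icc p₀ 0,
      2 * β p * G p * deriv (deriv G) p - β p * (deriv G p) ^ 2
        + deriv β p * G p * deriv G p - 2 * deriv (deriv β) p * (G p) ^ 2
        - 4 * k ^ 2 * (G p) ^ 2 + 4 * z = 0)
    (M Ψ : ℝ → ℝ)
    (hM2 : Differentiable ℝ M) (hM2' : Differentiable ℝ (deriv M))
    (hΨ2 : Differentiable ℝ Ψ) (hΨ2' : Differentiable ℝ (deriv Ψ))
    (hM : ∀ p, M p = Real.sqrt (G p / β p) * Ψ p) :
    ∀ p ∈ Set.Icc p₀ 0,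
      (β p * deriv (deriv M) p + 3 / 2 * deriv β p * deriv M p = k ^ 2 * M p)
        ↔ 2 * β p * (G p) ^ 2 * deriv (deriv Ψ) p
            + (2 * β p * G p * deriv G p + deriv β p * (G p) ^ 2) * deriv Ψ p
            - 2 * z * Ψ p = 0 :=
  stmt_3_general p₀ k z β G hβ hG hβpos hGpos hconstraint M Ψ hΨ2 hΨ2' hM
end

section
/- Let β, G be positive C² functions on [p₀,0] satisfying the constraint 2βGG'' − β(G')² + β'GG' − 2β''G² − 4k²G² + 4z = 0 with z > 0. Then the function M(p) = √(G(p)/β(p))·sinh(∫_{p₀}^p √z/(G(s)√(β(s))) ds) satisfies βM'' + (3/2)β'M' = k²M on [p₀,0] and M(p₀) = 0. -/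
/-!
Write `M = A sinh φ` with `A = √(G/β)` and `φ' = w = √z / (G √β)`, and let
`ℓ = A'/A = (G'/G - β'/β)/2`. Then `β M'' + (3/2) β' M'` is `A` times
`(β (ℓ' + ℓ² + w²) + (3/2) β' ℓ) sinh φ + (β (w' + 2ℓw) + (3/2) β' w) cosh φ`.
The `cosh φ` coefficient vanishes identically because `A² w β^(3/2) = √z` is constant, and
`4G²` times the `sinh φ` coefficient, minus `4k²G²`, is exactly the left side of the constraint.
-/

open Real Set Filter Topology

theorem IsOpen.exists_Ioo_subset_of_Icc_subset {U : Set ℝ} (hU : IsOpen U) {a b : ℝ} (hab : a ≤ b)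
    (h : Icc a b ⊆ U) : ∃ ε > 0, Ioo (a - ε) (b + ε) ⊆ U := by
  obtain ⟨ε, hε, hsub⟩ := isCompact_Icc.exists_thickening_subset_open hU h
  refine ⟨ε, hε, fun x hx => hsub (Metric.mem_thickening_iff.2 ⟨max a (min x b), ?_, ?_⟩)⟩
  · exact ⟨le_max_left _ _, max_le hab (min_le_right _ _)⟩
  · rw [Real.dist_eq, abs_lt]
    obtain ⟨hxa, hxb⟩ := hx
    constructor <;> cases le_total x b <;> cases le_total a (min x b) <;> simp_all <;> linarith

theorem ContinuousOn.integral_hasDerivAt {E : Type*} [NormedAddCommGroup E] [NormedSpace ℝ E]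
    [CompleteSpace E] {f : ℝ → E} {s : Set ℝ} {a x : ℝ} (hf : ContinuousOn f s) (hs : IsOpen s)
    (hs' : OrdConnected s) (ha : a ∈ s) (hx : x ∈ s) :
    HasDerivAt (fun y => ∫ t in a..y, f t) (f x) x :=
  intervalIntegral.integral_hasDerivAt_right
    ((hf.mono (hs'.uIcc_subset ha hx)).intervalIntegrable)
    (hf.stronglyMeasurableAtFilter hs x hx) (hf.continuousAt (hs.mem_nhds hx))

section SqrtQuotient

variable {f g : ℝ → ℝ} {f' g' x : ℝ}

theorem HasDerivAt.sqrt_div (hf : HasDerivAt f f' x) (hg : HasDerivAt g g' x) (hfx : 0 < f x)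
    (hgx : 0 < g x) :
    HasDerivAt (fun y => √(f y / g y)) (√(f x / g x) * ((f' / f x - g' / g x) / 2)) x := by
  have hpos : 0 < f x / g x := div_pos hfx hgx
  refine ((hf.fun_div hg hgx.ne').sqrt hpos.ne').congr_deriv ?_
  have hsq : √(f x / g x) ^ 2 = f x / g x := sq_sqrt hpos.le
  field_simp
  rw [hsq]
  field_simp

theorem HasDerivAt.const_div_mul_sqrt (c : ℝ) (hf : HasDerivAt f f' x) (hg : HasDerivAt g g' x)
    (hfx : 0 < f x) (hgx : 0 < g x) :
    HasDerivAt (fun y => c / (f y * √(g y)))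
      (c / (f x * √(g x)) * -(f' / f x + g' / (2 * g x))) x := by
  refine ((hasDerivAt_const x c).fun_div (hf.fun_mul (hg.sqrt hgx.ne')) (by positivity)).congr_deriv
    ?_
  have hsq : √(g x) ^ 2 = g x := sq_sqrt hgx.le
  field_simp
  linear_combination c * f x * g' * hsq

end SqrtQuotient

section SinhAnsatz

variable {A φ ℓ w : ℝ → ℝ} {x ℓ' w' : ℝ}

theorem hasDerivAt_mul_sinh (hA : HasDerivAt A (A x * ℓ x) x) (hφ : HasDerivAt φ (w x) x) :
    HasDerivAt (fun y => A y * sinh (φ y)) (A x * (ℓ x * sinh (φ x) + w x * cosh (φ x))) x :=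
  (hA.fun_mul hφ.sinh).congr_deriv (by ring)

theorem deriv_deriv_mul_sinh (hA : ∀ᶠ y in 𝓝 x, HasDerivAt A (A y * ℓ y) y)
    (hφ : ∀ᶠ y in 𝓝 x, HasDerivAt φ (w y) y) (hℓ : HasDerivAt ℓ ℓ' x) (hw : HasDerivAt w w' x) :
    deriv (deriv fun y => A y * sinh (φ y)) x =
      A x * ((ℓ' + ℓ x ^ 2 + w x ^ 2) * sinh (φ x) + (w' + 2 * ℓ x * w x) * cosh (φ x)) := by
  have hderiv : deriv (fun y => A y * sinh (φ y)) =ᶠ[𝓝 x]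
      fun y => A y * (ℓ y * sinh (φ y) + w y * cosh (φ y)) := by
    filter_upwards [hA, hφ] with y hAy hφy
    exact (hasDerivAt_mul_sinh hAy hφy).deriv
  rw [hderiv.deriv_eq]
  have hφx := hφ.self_of_nhds
  exact (hA.self_of_nhds.fun_mul ((hℓ.fun_mul hφx.sinh).fun_add (hw.fun_mul hφx.cosh))).deriv.trans
    (by ring)

theorem ode_of_mul_sinh {β' k : ℝ} (b : ℝ) (hA : ∀ᶠ y in 𝓝 x, HasDerivAt A (A y * ℓ y) y)
    (hφ : ∀ᶠ y in 𝓝 x, HasDerivAt φ (w y) y) (hℓ : HasDerivAt ℓ ℓ' x) (hw : HasDerivAt w w' x)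
    (hsinh : b * (ℓ' + ℓ x ^ 2 + w x ^ 2) + 3 / 2 * β' * ℓ x = k ^ 2)
    (hcosh : b * (w' + 2 * ℓ x * w x) + 3 / 2 * β' * w x = 0) :
    b * deriv (deriv fun y => A y * sinh (φ y)) x
        + 3 / 2 * β' * deriv (fun y => A y * sinh (φ y)) x = k ^ 2 * (A x * sinh (φ x)) := by
  rw [deriv_deriv_mul_sinh hA hφ hℓ hw, (hasDerivAt_mul_sinh hA.self_of_nhds hφ.self_of_nhds).deriv]
  linear_combination A x * sinh (φ x) * hsinh + A x * cosh (φ x) * hcosh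

end SinhAnsatz

theorem ode_sqrt_div_mul_sinh {β G φ : ℝ → ℝ} {k z x : ℝ} (hz : 0 ≤ z)
    (hβ : Differentiable ℝ β) (hβ' : Differentiable ℝ (deriv β))
    (hG : Differentiable ℝ G) (hG' : Differentiable ℝ (deriv G))
    (hpos : ∀ᶠ y in 𝓝 x, 0 < β y ∧ 0 < G y)
    (hφ : ∀ᶠ y in 𝓝 x, HasDerivAt φ (√z / (G y * √(β y))) y)
    (hconstraint : 2 * β x * G x * deriv (deriv G) x - β x * (deriv G x) ^ 2
        + deriv β x * G x * deriv G x - 2 * deriv (deriv β) x * (G x) ^ 2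
        - 4 * k ^ 2 * (G x) ^ 2 + 4 * z = 0) :
    β x * deriv (deriv fun y => √(G y / β y) * sinh (φ y)) x
        + 3 / 2 * deriv β x * deriv (fun y => √(G y / β y) * sinh (φ y)) x
      = k ^ 2 * (√(G x / β x) * sinh (φ x)) := by
  obtain ⟨hβx, hGx⟩ := hpos.self_of_nhds
  have hsqβ : √(β x) ^ 2 = β x := sq_sqrt hβx.le
  have hsqz : √z ^ 2 = z := sq_sqrt hz
  refine ode_of_mul_sinh (ℓ := fun y => (deriv G y / G y - deriv β y / β y) / 2)
    (β x) ?_ hφ ((((hG' x).hasDerivAt.div (hG x).hasDerivAt hGx.ne').sub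
      ((hβ' x).hasDerivAt.div (hβ x).hasDerivAt hβx.ne')).div_const 2)
    (HasDerivAt.const_div_mul_sqrt _ (hG x).hasDerivAt (hβ x).hasDerivAt hGx hβx) ?_ ?_
  · filter_upwards [hpos] with y hy
    exact (hG y).hasDerivAt.sqrt_div (hβ y).hasDerivAt hy.2 hy.1
  · field_simp
    rw [hsqβ, hsqz]
    field_simp
    linear_combination β x * hconstraint
  · field_simp
    ring

theorem stmt_4_general (p₀ k z : ℝ) (hz : 0 < z) (β G : ℝ → ℝ)
    (hβ : ContDiff ℝ 2 β) (hG : ContDiff ℝ 2 G)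
    (hβpos : ∀ p ∈ Set.Icc p₀ 0, 0 < β p)
    (hGpos : ∀ p ∈ Set.Icc p₀ 0, 0 < G p)
    (hconstraint : ∀ p ∈ Set.Icc p₀ 0,
      2 * β p * G p * deriv (deriv G) p - β p * (deriv G p) ^ 2
        + deriv β p * G p * deriv G p - 2 * deriv (deriv β) p * (G p) ^ 2
        - 4 * k ^ 2 * (G p) ^ 2 + 4 * z = 0)
    (M : ℝ → ℝ)
    (hM : ∀ p, M p = Real.sqrt (G p / β p) *
        Real.sinh (∫ s in p₀..p, Real.sqrt z / (G s * Real.sqrt (β s)))) :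
    (∀ p ∈ Set.Icc p₀ 0,
        β p * deriv (deriv M) p + 3 / 2 * deriv β p * deriv M p = k ^ 2 * M p)
      ∧ M p₀ = 0 := by
  refine ⟨fun p hp => ?_, by simp [hM]⟩
  obtain rfl : M = fun p => √(G p / β p) * sinh (∫ s in p₀..p, √z / (G s * √(β s))) := funext hM
  have hU : IsOpen {y | 0 < β y ∧ 0 < G y} :=
    (isOpen_lt continuous_const hβ.continuous).inter (isOpen_lt continuous_const hG.continuous)
  obtain ⟨ε, hε, hV⟩ := hU.exists_Ioo_subset_of_Icc_subset (hp.1.trans hp.2)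
    fun q hq => ⟨hβpos q hq, hGpos q hq⟩
  have hVp : Ioo (p₀ - ε) (0 + ε) ∈ 𝓝 p :=
    isOpen_Ioo.mem_nhds ⟨by linarith [hp.1], by linarith [hp.2]⟩
  have hp₀V : p₀ ∈ Ioo (p₀ - ε) (0 + ε) := ⟨by linarith, by linarith [hp.1.trans hp.2]⟩
  have hcont : ContinuousOn (fun s => √z / (G s * √(β s))) (Ioo (p₀ - ε) (0 + ε)) :=
    continuousOn_const.div (hG.continuous.mul (continuous_sqrt.comp hβ.continuous)).continuousOn
      fun y hy => (mul_pos (hV hy).2 (sqrt_pos.2 (hV hy).1)).ne'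
  exact ode_sqrt_div_mul_sinh hz.le (hβ.differentiable two_ne_zero) hβ.differentiable_deriv_two
    (hG.differentiable two_ne_zero) hG.differentiable_deriv_two
    (eventually_of_mem hVp fun y hy => hV hy)
    (eventually_of_mem hVp fun y hy =>
      hcont.integral_hasDerivAt isOpen_Ioo ordConnected_Ioo hp₀V hy)
    (hconstraint p hp)

/-- For `z > 0`, the function `M(p) = √(G(p)/β(p))·sinh(∫_{p₀}^p √z/(G√β))`
solves `βM'' + (3/2)β'M' = k²M` on `[p₀,0]` with `M(p₀) = 0`. -/
theorem stmt_4 (p₀ k z : ℝ) (hp₀ : p₀ < 0) (hk : 0 < k) (hz : 0 < z) (β G : ℝ → ℝ)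
    (hβ : ContDiff ℝ 2 β) (hG : ContDiff ℝ 2 G)
    (hβpos : ∀ p ∈ Set.Icc p₀ 0, 0 < β p)
    (hGpos : ∀ p ∈ Set.Icc p₀ 0, 0 < G p)
    (hconstraint : ∀ p ∈ Set.Icc p₀ 0,
      2 * β p * G p * deriv (deriv G) p - β p * (deriv G p) ^ 2
        + deriv β p * G p * deriv G p - 2 * deriv (deriv β) p * (G p) ^ 2
        - 4 * k ^ 2 * (G p) ^ 2 + 4 * z = 0)
    (M : ℝ → ℝ)
    (hM : ∀ p, M p = Real.sqrt (G p / β p) *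
        Real.sinh (∫ s in p₀..p, Real.sqrt z / (G s * Real.sqrt (β s)))) :
    (∀ p ∈ Set.Icc p₀ 0,
        β p * deriv (deriv M) p + 3 / 2 * deriv β p * deriv M p = k ^ 2 * M p)
      ∧ M p₀ = 0 :=
  stmt_4_general p₀ k z hz β G hβ hG hβpos hGpos hconstraint M hM
end

section
/- Let β, G be positive C² functions on [p₀,0] satisfying 2βGG'' − β(G')² + β'GG' − 2β''G² − 4k²G² + 4z = 0 with z = 0. Then M(p) = √(G(p)/β(p))·∫_{p₀}^p ds/(G(s)√(β(s))) satisfies βM'' + (3/2)β'M' = k²M on [p₀,0] and M(p₀)=0. -/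
/-!
Write `F = √(G/β)`. Substituting `G = F²β` into the constraint turns its left-hand side into
`4F³β²(βF'' + (3/2)β'F' - k²F)`, so the constraint says exactly that `F` solves
`βy'' + (3/2)β'y' = k²y`. By Abel's formula `W = β^(-3/2)` solves `βW' + (3/2)β'W = 0`, and
`W/F² = 1/(G√β)`; hence `M = F ∫ W/F²` is the second solution produced by reduction of order.
-/

open Set Filter Topology

theorem ContDiffOn.eventually_hasDerivAt_deriv {f : ℝ → ℝ} {s : Set ℝ} {x : ℝ}
    (hf : ContDiffOn ℝ 2 f s) (hs : IsOpen s) (hx : x ∈ s) :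
    (∀ᶠ y in 𝓝 x, HasDerivAt f (deriv f y) y) ∧ HasDerivAt (deriv f) (deriv (deriv f) x) x := by
  have hf' : ContDiffOn ℝ 1 (deriv f) s := hf.deriv_of_isOpen hs (by norm_num)
  refine ⟨?_, ?_⟩
  · filter_upwards [hs.mem_nhds hx] with y hy
    exact ((hf.differentiableOn (by norm_num) y hy).differentiableAt (hs.mem_nhds hy)).hasDerivAt
  · exact ((hf'.differentiableOn one_ne_zero x hx).differentiableAt (hs.mem_nhds hx)).hasDerivAt

theorem deriv_deriv_eq_of_eventually_hasDerivAt {f f' : ℝ → ℝ} {x f'' : ℝ}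
    (hf : ∀ᶠ y in 𝓝 x, HasDerivAt f (f' y) y) (hf' : HasDerivAt f' f'' x) :
    deriv (deriv f) x = f'' :=
  Filter.EventuallyEq.deriv_eq (hf.mono fun _ hy => hy.deriv) |>.trans hf'.deriv

theorem ContinuousOn.eventually_hasDerivAt_integral {E : Type*} [NormedAddCommGroup E]
    [NormedSpace ℝ E] [CompleteSpace E] {f : ℝ → E} {U : Set ℝ} {a x : ℝ}
    (hf : ContinuousOn f U) (hU : IsOpen U) (hax : uIcc a x ⊆ U) :
    ∀ᶠ y in 𝓝 x, HasDerivAt (fun y => ∫ t in a..y, f t) (f y) y := by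
  -- `U` need not be an interval, but its component containing `[a, x]` is.
  set V := connectedComponentIn U a
  have hV : IsOpen V := hU.connectedComponentIn
  have haV : a ∈ V := mem_connectedComponentIn (hax left_mem_uIcc)
  have hxV : x ∈ V :=
    isPreconnected_uIcc.subset_connectedComponentIn left_mem_uIcc hax right_mem_uIcc
  have hfV : ContinuousOn f V := hf.mono (connectedComponentIn_subset U a)
  filter_upwards [hV.mem_nhds hxV] with y hy
  exact intervalIntegral.integral_hasDerivAt_right
    (hfV.mono (isPreconnected_connectedComponentIn.ordConnected.uIcc_subset haV hy)).intervalIntegrable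
    (hfV.stronglyMeasurableAtFilter hV y hy) (hfV.continuousAt (hV.mem_nhds hy))

theorem reduction_of_order {a b q x F'' W' : ℝ} {F F' W I M : ℝ → ℝ}
    (hF : ∀ᶠ y in 𝓝 x, HasDerivAt F (F' y) y) (hF' : HasDerivAt F' F'' x)
    (hW : HasDerivAt W W' x) (hFx : F x ≠ 0)
    (hI : ∀ᶠ y in 𝓝 x, HasDerivAt I (W y / F y ^ 2) y)
    (hM : ∀ᶠ y in 𝓝 x, M y = F y * I y)
    (hFode : a * F'' + b * F' x = q * F x) (hWode : a * W' + b * W x = 0) :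
    a * deriv (deriv M) x + b * deriv M x = q * M x := by
  have hM' : ∀ᶠ y in 𝓝 x, HasDerivAt M (F' y * I y + F y * (W y / F y ^ 2)) y := by
    filter_upwards [hF, hI, hM.eventually_nhds] with y hFy hIy hMy
    exact (hFy.mul hIy).congr_of_eventuallyEq hMy
  have hM'' : HasDerivAt (fun y => F' y * I y + F y * (W y / F y ^ 2)) _ x :=
    (hF'.mul hI.self_of_nhds).add
      (hF.self_of_nhds.mul (hW.div (hF.self_of_nhds.pow 2) (pow_ne_zero 2 hFx)))
  rw [deriv_deriv_eq_of_eventually_hasDerivAt hM' hM'', hM'.self_of_nhds.deriv, hM.self_of_nhds]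
  field_simp
  linear_combination (I x * F x ^ 3) * hFode + F x ^ 2 * hWode

theorem hasDerivAt_inv_mul_sqrt {β : ℝ → ℝ} {x β' : ℝ} (hβ : HasDerivAt β β' x) (hx : 0 < β x) :
    HasDerivAt (fun y => (β y * √(β y))⁻¹) (-(3 / 2) * β' / (β x ^ 2 * √(β x))) x := by
  have hs : 0 < √(β x) := Real.sqrt_pos.2 hx
  refine ((hβ.fun_mul (hβ.sqrt hx.ne')).fun_inv (mul_pos hx hs).ne').congr_deriv ?_
  field_simp
  rw [Real.sq_sqrt hx.le]
  ring

theorem isOpen_setOf_pos_and_pos {β G : ℝ → ℝ} (hβ : Continuous β) (hG : Continuous G) :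
    IsOpen {x | 0 < β x ∧ 0 < G x} :=
  (isOpen_lt continuous_const hβ).inter (isOpen_lt continuous_const hG)

theorem contDiffOn_sqrt_div {n : WithTop ℕ∞} {β G : ℝ → ℝ} (hβ : ContDiff ℝ n β)
    (hG : ContDiff ℝ n G) : ContDiffOn ℝ n (fun x => √(G x / β x)) {x | 0 < β x ∧ 0 < G x} :=
  (hG.contDiffOn.div hβ.contDiffOn fun _ hx => hx.1.ne').sqrt fun _ hx => (div_pos hx.2 hx.1).ne'

theorem sqrt_div_ode {β G : ℝ → ℝ} {k x : ℝ} (hβ : ContDiff ℝ 2 β) (hG : ContDiff ℝ 2 G)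
    (hβx : 0 < β x) (hGx : 0 < G x)
    (h : 2 * β x * G x * deriv (deriv G) x - β x * deriv G x ^ 2 + deriv β x * G x * deriv G x
      - 2 * deriv (deriv β) x * G x ^ 2 - 4 * k ^ 2 * G x ^ 2 = 0) :
    β x * deriv (deriv fun y => √(G y / β y)) x
      + 3 / 2 * deriv β x * deriv (fun y => √(G y / β y)) x = k ^ 2 * √(G x / β x) := by
  set F := fun y => √(G y / β y)
  have hxU : x ∈ {y | 0 < β y ∧ 0 < G y} := ⟨hβx, hGx⟩
  have hU := isOpen_setOf_pos_and_pos hβ.continuous hG.continuous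
  obtain ⟨hF, hF'⟩ := (contDiffOn_sqrt_div hβ hG).eventually_hasDerivAt_deriv hU hxU
  obtain ⟨hβ', hβ''⟩ := hβ.contDiffOn.eventually_hasDerivAt_deriv isOpen_univ (mem_univ x)
  have hGF : ∀ᶠ y in 𝓝 x, G y = F y ^ 2 * β y := by
    filter_upwards [hU.mem_nhds hxU] with y hy
    rw [Real.sq_sqrt (div_pos hy.2 hy.1).le, div_mul_cancel₀ _ hy.1.ne']
  have hG' : ∀ᶠ y in 𝓝 x,
      HasDerivAt G (2 * F y * deriv F y * β y + F y ^ 2 * deriv β y) y := by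
    filter_upwards [hF, hβ', hGF.eventually_nhds] with y hFy hβy hGy
    exact (((hFy.fun_pow 2).fun_mul hβy).congr_of_eventuallyEq hGy).congr_deriv (by ring)
  have hG'' : HasDerivAt (fun y => 2 * F y * deriv F y * β y + F y ^ 2 * deriv β y)
      (2 * deriv F x ^ 2 * β x + 2 * F x * deriv (deriv F) x * β x
        + 4 * F x * deriv F x * deriv β x + F x ^ 2 * deriv (deriv β) x) x := by
    refine ((((hF.self_of_nhds.const_mul 2).fun_mul hF').fun_mul hβ'.self_of_nhds).fun_add
      ((hF.self_of_nhds.fun_pow 2).fun_mul hβ'')).congr_deriv ?_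
    ring
  rw [hG'.self_of_nhds.deriv, deriv_deriv_eq_of_eventually_hasDerivAt hG' hG'',
    hGF.self_of_nhds] at h
  have hFx : 0 < F x := Real.sqrt_pos.2 (div_pos hGx hβx)
  have key : 4 * F x ^ 3 * β x ^ 2
      * (β x * deriv (deriv F) x + 3 / 2 * deriv β x * deriv F x - k ^ 2 * F x) = 0 := by
    linear_combination h
  linarith [(mul_eq_zero.1 key).resolve_left (by positivity)]

theorem stmt_5_general (p₀ k : ℝ) (β G : ℝ → ℝ)
    (hβ : ContDiff ℝ 2 β) (hG : ContDiff ℝ 2 G)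
    (hβpos : ∀ p ∈ Set.Icc p₀ 0, 0 < β p)
    (hGpos : ∀ p ∈ Set.Icc p₀ 0, 0 < G p)
    (hconstraint : ∀ p ∈ Set.Icc p₀ 0,
      2 * β p * G p * deriv (deriv G) p - β p * (deriv G p) ^ 2
        + deriv β p * G p * deriv G p - 2 * deriv (deriv β) p * (G p) ^ 2
        - 4 * k ^ 2 * (G p) ^ 2 + 4 * (0 : ℝ) = 0)
    (M : ℝ → ℝ)
    (hM : ∀ p, M p = Real.sqrt (G p / β p) *
        ∫ s in p₀..p, 1 / (G s * Real.sqrt (β s))) :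
    (∀ p ∈ Set.Icc p₀ 0,
        β p * deriv (deriv M) p + 3 / 2 * deriv β p * deriv M p = k ^ 2 * M p)
      ∧ M p₀ = 0 := by
  refine ⟨fun p hp => ?_, by rw [hM, intervalIntegral.integral_same, mul_zero]⟩
  set U := {x | 0 < β x ∧ 0 < G x}
  have hU : IsOpen U := isOpen_setOf_pos_and_pos hβ.continuous hG.continuous
  have hIccU : Icc p₀ 0 ⊆ U := fun x hx => ⟨hβpos x hx, hGpos x hx⟩
  have hpU : p ∈ U := hIccU hp
  have hg : ContinuousOn (fun s => 1 / (G s * √(β s))) U :=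
    continuousOn_const.div (hG.continuous.continuousOn.mul hβ.continuous.continuousOn.sqrt)
      fun x hx => (mul_pos hx.2 (Real.sqrt_pos.2 hx.1)).ne'
  have hI := hg.eventually_hasDerivAt_integral hU
    ((uIcc_of_le hp.1).trans_subset ((Icc_subset_Icc_right hp.2).trans hIccU))
  obtain ⟨hF, hF'⟩ := (contDiffOn_sqrt_div hβ hG).eventually_hasDerivAt_deriv hU hpU
  refine reduction_of_order hF hF'
    (hasDerivAt_inv_mul_sqrt (hβ.differentiable two_ne_zero p).hasDerivAt hpU.1)
    (Real.sqrt_pos.2 (div_pos hpU.2 hpU.1)).ne' ?_ (.of_forall hM)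
    (sqrt_div_ode hβ hG hpU.1 hpU.2 (by simpa using hconstraint p hp)) ?_
  · filter_upwards [hI, hU.mem_nhds hpU] with y hy hyU
    refine hy.congr_deriv ?_
    rw [Real.sq_sqrt (div_pos hyU.2 hyU.1).le]
    field_simp [hyU.1.ne']
  · field_simp
    ring

/-- For `z = 0`, the function `M(p) = √(G(p)/β(p))·∫_{p₀}^p ds/(G√β)`
solves `βM'' + (3/2)β'M' = k²M` on `[p₀,0]` with `M(p₀) = 0`. -/
theorem stmt_5 (p₀ k : ℝ) (hp₀ : p₀ < 0) (hk : 0 < k) (β G : ℝ → ℝ)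
    (hβ : ContDiff ℝ 2 β) (hG : ContDiff ℝ 2 G)
    (hβpos : ∀ p ∈ Set.Icc p₀ 0, 0 < β p)
    (hGpos : ∀ p ∈ Set.Icc p₀ 0, 0 < G p)
    (hconstraint : ∀ p ∈ Set.Icc p₀ 0,
      2 * β p * G p * deriv (deriv G) p - β p * (deriv G p) ^ 2
        + deriv β p * G p * deriv G p - 2 * deriv (deriv β) p * (G p) ^ 2
        - 4 * k ^ 2 * (G p) ^ 2 + 4 * (0 : ℝ) = 0)
    (M : ℝ → ℝ)
    (hM : ∀ p, M p = Real.sqrt (G p / β p) *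
        ∫ s in p₀..p, 1 / (G s * Real.sqrt (β s))) :
    (∀ p ∈ Set.Icc p₀ 0,
        β p * deriv (deriv M) p + 3 / 2 * deriv β p * deriv M p = k ^ 2 * M p)
      ∧ M p₀ = 0 :=
  stmt_5_general p₀ k β G hβ hG hβpos hGpos hconstraint M hM
end

section
/- (Polynomial vorticity) Let a > 0, n ∈ ℝ with n ∉ {2, −2, 2/3}, and c₁, c₂, z ∈ ℝ. Define G(p) = (1−ap)ⁿ and β(p) = 2c₁(1−ap)ⁿ + 2c₂(1−ap)^{1−n/2}/(a(3n−2)) + 4z(1−ap)^{2−2n}/(a²(3n−2)²) + 4k²(1−ap)²/(a²(n²−4)). Then for all p < 1/a, the identity 2βGG'' − β(G')² + β'GG' − 2β''G² − 4k²G² + 4z = 0 holds. -/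
/-!
The left-hand side is `L(β) - 4k²G² + 4z`, where `L(β) = 2βGG'' - βG'² + β'GG' - 2β''G²` is
linear in `β`. With `t = 1 - ap` and `G = tⁿ`, a power `β = tᵐ` gives
`L(tᵐ) = a² (n - m) (n + 2m - 2) t^(m + 2n - 2)`. Hence the exponents `m = n` and `m = 1 - n/2`
are annihilated, `m = 2 - 2n` yields the constant `-a² (3n - 2)²`, and `m = 2` yields
`a² (n² - 4) G²`; the coefficients of `β` are chosen to turn these into `-4z` and `4k²G²`.
-/

open Filter Topology

theorem iteratedDeriv_two_eq_deriv_deriv {𝕜 F : Type*} [NontriviallyNormedField 𝕜]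
    [NormedAddCommGroup F] [NormedSpace 𝕜 F] (f : 𝕜 → F) :
    iteratedDeriv 2 f = deriv (deriv f) := by
  rw [iteratedDeriv_eq_iterate]
  rfl

theorem contDiffAt_one_sub_mul_rpow (a m : ℝ) {k : WithTop ℕ∞} {p : ℝ} (hp : 0 < 1 - a * p) :
    ContDiffAt ℝ k (fun q => (1 - a * q) ^ m) p :=
  ContDiffAt.rpow_const_of_ne (by fun_prop) hp.ne'

theorem iteratedDeriv_one_sub_mul_rpow (a m : ℝ) (k : ℕ) {p : ℝ} (hp : 0 < 1 - a * p) :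
    iteratedDeriv k (fun q => (1 - a * q) ^ m) p
      = (-a) ^ k * (descPochhammer ℝ k).eval m * (1 - a * p) ^ (m - k) := by
  induction k generalizing p with
  | zero => simp
  | succ k ih =>
    have hk : iteratedDeriv k (fun q => (1 - a * q) ^ m) =ᶠ[𝓝 p]
        fun q => (-a) ^ k * (descPochhammer ℝ k).eval m * (1 - a * q) ^ (m - k) := by
      filter_upwards [continuousAt_const.eventually_lt
        (show ContinuousAt (fun q => 1 - a * q) p by fun_prop) hp] with q hq
      exact ih hq
    have hbase : HasDerivAt (fun q => 1 - a * q) (-a) p := by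
      simpa using ((hasDerivAt_id p).const_mul a).const_sub 1
    rw [iteratedDeriv_succ, hk.deriv_eq,
      ((hbase.rpow_const (Or.inl hp.ne')).const_mul _).deriv, descPochhammer_succ_eval]
    push_cast
    rw [sub_sub]
    ring

noncomputable def vorticityForm (G β : ℝ → ℝ) (p : ℝ) : ℝ :=
  2 * β p * G p * deriv (deriv G) p - β p * (deriv G p) ^ 2
    + deriv β p * G p * deriv G p - 2 * deriv (deriv β) p * (G p) ^ 2

theorem vorticityForm_add {G β₁ β₂ : ℝ → ℝ} {p : ℝ} (h₁ : ContDiffAt ℝ 2 β₁ p)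
    (h₂ : ContDiffAt ℝ 2 β₂ p) :
    vorticityForm G (fun q => β₁ q + β₂ q) p = vorticityForm G β₁ p + vorticityForm G β₂ p := by
  have hd : deriv (fun q => β₁ q + β₂ q) p = deriv β₁ p + deriv β₂ p :=
    deriv_add (h₁.differentiableAt (by norm_num)) (h₂.differentiableAt (by norm_num))
  have hdd : deriv (deriv fun q => β₁ q + β₂ q) p = deriv (deriv β₁) p + deriv (deriv β₂) p := by
    simp only [← iteratedDeriv_two_eq_deriv_deriv]
    exact iteratedDeriv_fun_add h₁ h₂
  simp only [vorticityForm, hd, hdd]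
  ring

theorem vorticityForm_const_mul (G β : ℝ → ℝ) (c p : ℝ) :
    vorticityForm G (fun q => c * β q) p = c * vorticityForm G β p := by
  simp only [vorticityForm, deriv_const_mul_field']
  ring

theorem vorticityForm_one_sub_mul_rpow (a n m : ℝ) {p : ℝ} (hp : 0 < 1 - a * p) :
    vorticityForm (fun q => (1 - a * q) ^ n) (fun q => (1 - a * q) ^ m) p
      = a ^ 2 * (n - m) * (n + 2 * m - 2) * (1 - a * p) ^ (m + 2 * n - 2) := by
  simp only [vorticityForm, ← iteratedDeriv_two_eq_deriv_deriv]
  simp only [← iteratedDeriv_one, iteratedDeriv_one_sub_mul_rpow a _ _ hp]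
  have hexp : (1 - a * p) ^ (m + 2 * n - 2)
      = (1 - a * p) ^ m * (1 - a * p) ^ n * (1 - a * p) ^ n / (1 - a * p) ^ 2 := by
    rw [show m + 2 * n - 2 = m + n + n - 2 by ring, Real.rpow_sub hp, Real.rpow_add hp,
      Real.rpow_add hp, Real.rpow_two]
  rw [hexp]
  simp only [descPochhammer_succ_eval, descPochhammer_one, Polynomial.eval_X, Nat.cast_one,
    Nat.cast_ofNat, Real.rpow_sub hp, Real.rpow_one, Real.rpow_ofNat]
  field_simp
  ring

theorem stmt_7_general (a k n c₁ c₂ z : ℝ) (ha : 0 < a)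
    (hn1 : n ≠ 2) (hn2 : n ≠ -2) (hn3 : n ≠ 2 / 3)
    (G β : ℝ → ℝ)
    (hGdef : ∀ p, G p = (1 - a * p) ^ n)
    (hβdef : ∀ p, β p = 2 * c₁ * (1 - a * p) ^ n
        + 2 * c₂ * (1 - a * p) ^ (1 - n / 2) / (a * (3 * n - 2))
        + 4 * z * (1 - a * p) ^ (2 - 2 * n) / (a ^ 2 * (3 * n - 2) ^ 2)
        + 4 * k ^ 2 * (1 - a * p) ^ (2 : ℝ) / (a ^ 2 * (n ^ 2 - 4))) :
    ∀ p : ℝ, p < 1 / a →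
      2 * β p * G p * deriv (deriv G) p - β p * (deriv G p) ^ 2
        + deriv β p * G p * deriv G p - 2 * deriv (deriv β) p * (G p) ^ 2
        - 4 * k ^ 2 * (G p) ^ 2 + 4 * z = 0 := by
  intro p hp
  have ht : 0 < 1 - a * p := by rw [lt_div_iff₀ ha] at hp; linarith
  have h3n : 3 * n - 2 ≠ 0 := fun h => hn3 (by linarith)
  have hn4 : n ^ 2 - 4 ≠ 0 := by
    rw [show n ^ 2 - 4 = (n - 2) * (n + 2) by ring]
    exact mul_ne_zero (sub_ne_zero.mpr hn1) (fun h => hn2 (by linarith))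
  have hG : G = fun q => (1 - a * q) ^ n := funext hGdef
  have hβ : β = fun q => 2 * c₁ * (1 - a * q) ^ n
      + 2 * c₂ / (a * (3 * n - 2)) * (1 - a * q) ^ (1 - n / 2)
      + 4 * z / (a ^ 2 * (3 * n - 2) ^ 2) * (1 - a * q) ^ (2 - 2 * n)
      + 4 * k ^ 2 / (a ^ 2 * (n ^ 2 - 4)) * (1 - a * q) ^ (2 : ℝ) := by
    funext q; rw [hβdef]; ring
  show vorticityForm G β p - 4 * k ^ 2 * (G p) ^ 2 + 4 * z = 0
  rw [hGdef]
  subst hG hβ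
  have hC (m : ℝ) : ContDiffAt ℝ 2 (fun q => (1 - a * q) ^ m) p := contDiffAt_one_sub_mul_rpow a m ht
  rw [vorticityForm_add (by fun_prop) (by fun_prop), vorticityForm_add (by fun_prop) (by fun_prop),
    vorticityForm_add (by fun_prop) (by fun_prop)]
  simp only [vorticityForm_const_mul, vorticityForm_one_sub_mul_rpow a n _ ht]
  rw [show 2 - 2 * n + 2 * n - 2 = (0 : ℝ) by ring, Real.rpow_zero,
    show (2 : ℝ) + 2 * n - 2 = n + n by ring, Real.rpow_add ht]
  have hz : 4 * z / (a ^ 2 * (3 * n - 2) ^ 2)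
      * (a ^ 2 * (n - (2 - 2 * n)) * (n + 2 * (2 - 2 * n) - 2)) = -(4 * z) := by
    field_simp; ring
  have hk : 4 * k ^ 2 / (a ^ 2 * (n ^ 2 - 4)) * (a ^ 2 * (n - 2) * (n + 2 * 2 - 2)) = 4 * k ^ 2 := by
    field_simp; ring
  linear_combination hz + ((1 - a * p) ^ n) ^ 2 * hk

/-- Polynomial vorticity: with `G(p) = (1−ap)ⁿ` and the associated `β`,
the constraint `2βGG'' − β(G')² + β'GG' − 2β''G² − 4k²G² + 4z = 0` holds for `p < 1/a`. -/
theorem stmt_7 (a k n c₁ c₂ z : ℝ) (ha : 0 < a) (hk : 0 < k)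
    (hn1 : n ≠ 2) (hn2 : n ≠ -2) (hn3 : n ≠ 2 / 3)
    (G β : ℝ → ℝ)
    (hGdef : ∀ p, G p = (1 - a * p) ^ n)
    (hβdef : ∀ p, β p = 2 * c₁ * (1 - a * p) ^ n
        + 2 * c₂ * (1 - a * p) ^ (1 - n / 2) / (a * (3 * n - 2))
        + 4 * z * (1 - a * p) ^ (2 - 2 * n) / (a ^ 2 * (3 * n - 2) ^ 2)
        + 4 * k ^ 2 * (1 - a * p) ^ (2 : ℝ) / (a ^ 2 * (n ^ 2 - 4))) :
    ∀ p : ℝ, p < 1 / a →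
      2 * β p * G p * deriv (deriv G) p - β p * (deriv G p) ^ 2
        + deriv β p * G p * deriv G p - 2 * deriv (deriv β) p * (G p) ^ 2
        - 4 * k ^ 2 * (G p) ^ 2 + 4 * z = 0 :=
  stmt_7_general a k n c₁ c₂ z ha hn1 hn2 hn3 G β hGdef hβdef
end

section
/- (Exponential vorticity #1) Let a ≠ 0 and c₁, c₂, z ∈ ℝ. Define G(p) = e^{ap} and β(p) = c₁e^{ap} + c₂e^{−ap/2} + 4k²/a² + 4z e^{−2ap}/(9a²). Then 2βGG'' − β(G')² + β'GG' − 2β''G² − 4k²G² + 4z = 0 for all p ∈ ℝ. -/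
/-!
With `G = e^{ap}` the left-hand side is `e^{2ap} (a²β + aβ' − 2β'') − 4k² e^{2ap} + 4z`.
The operator `β ↦ a²β + aβ' − 2β''` multiplies `e^{rp}` by `a² + ar − 2r² = (a − r)(a + 2r)`,
so it kills `e^{ap}` and `e^{−ap/2}`, sends the constant `4k²/a²` to `4k²` and
`4z e^{−2ap}/(9a²)` to `−4z e^{−2ap}`; both surviving terms cancel.
-/

open Real

theorem hasDerivAt_const_mul_exp_mul (c d x : ℝ) :
    HasDerivAt (fun x => c * exp (d * x)) (c * d * exp (d * x)) x := by
  simpa [mul_assoc, mul_comm d] using (((hasDerivAt_id x).const_mul d).exp).const_mul c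

theorem deriv_sum_three_const_mul_exp_mul (c₁ c₂ c₃ d₁ d₂ d₃ : ℝ) :
    deriv (fun x => c₁ * exp (d₁ * x) + c₂ * exp (d₂ * x) + c₃ * exp (d₃ * x)) =
      fun x => c₁ * d₁ * exp (d₁ * x) + c₂ * d₂ * exp (d₂ * x) + c₃ * d₃ * exp (d₃ * x) :=
  funext fun x => (((hasDerivAt_const_mul_exp_mul c₁ d₁ x).add
    (hasDerivAt_const_mul_exp_mul c₂ d₂ x)).add (hasDerivAt_const_mul_exp_mul c₃ d₃ x)).deriv

theorem deriv_exp_mul (a : ℝ) :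
    deriv (fun x => exp (a * x)) = fun x => a * exp (a * x) := by
  rw [← iteratedDeriv_one, iteratedDeriv_exp_const_mul, pow_one]

theorem deriv_deriv_exp_mul (a : ℝ) :
    deriv (deriv fun x => exp (a * x)) = fun x => a ^ 2 * exp (a * x) := by
  simpa only [iteratedDeriv_succ, iteratedDeriv_zero] using iteratedDeriv_exp_const_mul 2 a

theorem beta_terms_eq_of_eq_exp (a : ℝ) {G : ℝ → ℝ} (hG : ∀ p, G p = exp (a * p))
    (β : ℝ → ℝ) (p : ℝ) :
    2 * β p * G p * deriv (deriv G) p - β p * (deriv G p) ^ 2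
        + deriv β p * G p * deriv G p - 2 * deriv (deriv β) p * (G p) ^ 2 =
      exp (a * p) ^ 2 * (a ^ 2 * β p + a * deriv β p - 2 * deriv (deriv β) p) := by
  obtain rfl : G = fun x => exp (a * x) := funext hG
  rw [deriv_deriv_exp_mul, deriv_exp_mul]
  ring

theorem sq_mul_add_mul_deriv_sub_two_mul_deriv_deriv_eq {a k c₁ c₂ z : ℝ} (ha : a ≠ 0)
    {β : ℝ → ℝ} (hβ : ∀ p, β p = c₁ * exp (a * p) + c₂ * exp (-a * p / 2)
        + 4 * k ^ 2 / a ^ 2 + 4 * z * exp (-2 * a * p) / (9 * a ^ 2)) (p : ℝ) :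
    a ^ 2 * β p + a * deriv β p - 2 * deriv (deriv β) p =
      4 * k ^ 2 - 4 * z * exp (-2 * a * p) := by
  obtain rfl : β = fun x => c₁ * exp (a * x) + c₂ * exp (-a / 2 * x)
      + 4 * z / (9 * a ^ 2) * exp (-2 * a * x) + 4 * k ^ 2 / a ^ 2 := by
    funext x
    rw [hβ]
    ring_nf
  rw [deriv_add_const', deriv_sum_three_const_mul_exp_mul, deriv_sum_three_const_mul_exp_mul]
  field_simp
  ring

theorem stmt_8_general (a k c₁ c₂ z : ℝ) (ha : a ≠ 0)
    (G β : ℝ → ℝ)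
    (hGdef : ∀ p, G p = Real.exp (a * p))
    (hβdef : ∀ p, β p = c₁ * Real.exp (a * p) + c₂ * Real.exp (-a * p / 2)
        + 4 * k ^ 2 / a ^ 2 + 4 * z * Real.exp (-2 * a * p) / (9 * a ^ 2)) :
    ∀ p : ℝ,
      2 * β p * G p * deriv (deriv G) p - β p * (deriv G p) ^ 2
        + deriv β p * G p * deriv G p - 2 * deriv (deriv β) p * (G p) ^ 2
        - 4 * k ^ 2 * (G p) ^ 2 + 4 * z = 0 := by
  intro p
  rw [beta_terms_eq_of_eq_exp a hGdef, sq_mul_add_mul_deriv_sub_two_mul_deriv_deriv_eq ha hβdef,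
    hGdef]
  have hexp : exp (a * p) ^ 2 * exp (-2 * a * p) = 1 := by
    rw [← exp_nat_mul, ← exp_add, ← exp_zero]
    ring_nf
  linear_combination (-4 * z) * hexp

/-- Exponential vorticity #1: with `G(p) = e^{ap}` and the associated `β`,
the constraint `2βGG'' − β(G')² + β'GG' − 2β''G² − 4k²G² + 4z = 0` holds for all `p`. -/
theorem stmt_8 (a k c₁ c₂ z : ℝ) (ha : a ≠ 0) (hk : 0 < k)
    (G β : ℝ → ℝ)
    (hGdef : ∀ p, G p = Real.exp (a * p))
    (hβdef : ∀ p, β p = c₁ * Real.exp (a * p) + c₂ * Real.exp (-a * p / 2)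
        + 4 * k ^ 2 / a ^ 2 + 4 * z * Real.exp (-2 * a * p) / (9 * a ^ 2)) :
    ∀ p : ℝ,
      2 * β p * G p * deriv (deriv G) p - β p * (deriv G p) ^ 2
        + deriv β p * G p * deriv G p - 2 * deriv (deriv β) p * (G p) ^ 2
        - 4 * k ^ 2 * (G p) ^ 2 + 4 * z = 0 :=
  stmt_8_general a k c₁ c₂ z ha G β hGdef hβdef
end

section
/- (Quadratic vorticity) Let a ≠ 0 and λ, k ∈ ℝ with k > 0. Define G(p) = (50a³p³)/3 − 20a²k²p² + 16ak⁴p + (25a²λ − 16k⁶) and β(p) = λ + 2ap³/3. Then 2βGG'' − β(G')² + β'GG' − 2β''G² − 4k²G² + 4z = 0 holds with z = k²(1125a⁴λ² − 1056a²k⁶λ + 256k¹²). -/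
section Cubic

variable {𝕜 : Type*} [NontriviallyNormedField 𝕜]

theorem hasDerivAt_cubic (c₃ c₂ c₁ c₀ x : 𝕜) :
    HasDerivAt (fun x => c₃ * x ^ 3 + c₂ * x ^ 2 + c₁ * x + c₀)
      (3 * c₃ * x ^ 2 + 2 * c₂ * x + c₁) x := by
  have h := ((((hasDerivAt_pow 3 x).const_mul c₃).add ((hasDerivAt_pow 2 x).const_mul c₂)).add
    ((hasDerivAt_id x).const_mul c₁)).add_const c₀
  exact h.congr_deriv (by norm_num; ring)

theorem deriv_cubic (c₃ c₂ c₁ c₀ : 𝕜) :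
    deriv (fun x => c₃ * x ^ 3 + c₂ * x ^ 2 + c₁ * x + c₀)
      = fun x => 3 * c₃ * x ^ 2 + 2 * c₂ * x + c₁ :=
  funext fun x => (hasDerivAt_cubic c₃ c₂ c₁ c₀ x).deriv

theorem deriv_deriv_cubic (c₃ c₂ c₁ c₀ : 𝕜) :
    deriv (deriv fun x => c₃ * x ^ 3 + c₂ * x ^ 2 + c₁ * x + c₀)
      = fun x => 6 * c₃ * x + 2 * c₂ := by
  have hquad : (fun x : 𝕜 => 3 * c₃ * x ^ 2 + 2 * c₂ * x + c₁)
      = fun x => 0 * x ^ 3 + 3 * c₃ * x ^ 2 + 2 * c₂ * x + c₁ := by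
    funext x; ring
  rw [deriv_cubic, hquad, deriv_cubic]
  funext x; ring

end Cubic

theorem stmt_10_general (a lam k : ℝ)
    (G β : ℝ → ℝ)
    (hGdef : ∀ p, G p = 50 * a ^ 3 * p ^ 3 / 3 - 20 * a ^ 2 * k ^ 2 * p ^ 2
        + 16 * a * k ^ 4 * p + (25 * a ^ 2 * lam - 16 * k ^ 6))
    (hβdef : ∀ p, β p = lam + 2 * a * p ^ 3 / 3) :
    ∀ p : ℝ,
      2 * β p * G p * deriv (deriv G) p - β p * (deriv G p) ^ 2
        + deriv β p * G p * deriv G p - 2 * deriv (deriv β) p * (G p) ^ 2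
        - 4 * k ^ 2 * (G p) ^ 2
        + 4 * (k ^ 2 * (1125 * a ^ 4 * lam ^ 2 - 1056 * a ^ 2 * k ^ 6 * lam
            + 256 * k ^ 12)) = 0 := by
  have hG : G = fun x => 50 * a ^ 3 / 3 * x ^ 3 + -(20 * a ^ 2 * k ^ 2) * x ^ 2
      + 16 * a * k ^ 4 * x + (25 * a ^ 2 * lam - 16 * k ^ 6) := by
    funext x; rw [hGdef]; ring
  have hβ : β = fun x => 2 * a / 3 * x ^ 3 + 0 * x ^ 2 + 0 * x + lam := by
    funext x; rw [hβdef]; ring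
  intro p
  rw [hG, hβ, deriv_deriv_cubic, deriv_cubic, deriv_deriv_cubic, deriv_cubic]
  ring

/-- Quadratic vorticity: with the cubic `G` and `β(p) = λ + 2ap³/3`, the constraint holds
with `z = k²(1125a⁴λ² − 1056a²k⁶λ + 256k¹²)`. -/
theorem stmt_10 (a lam k : ℝ) (ha : a ≠ 0) (hk : 0 < k)
    (G β : ℝ → ℝ)
    (hGdef : ∀ p, G p = 50 * a ^ 3 * p ^ 3 / 3 - 20 * a ^ 2 * k ^ 2 * p ^ 2
        + 16 * a * k ^ 4 * p + (25 * a ^ 2 * lam - 16 * k ^ 6))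
    (hβdef : ∀ p, β p = lam + 2 * a * p ^ 3 / 3) :
    ∀ p : ℝ,
      2 * β p * G p * deriv (deriv G) p - β p * (deriv G p) ^ 2
        + deriv β p * G p * deriv G p - 2 * deriv (deriv β) p * (G p) ^ 2
        - 4 * k ^ 2 * (G p) ^ 2
        + 4 * (k ^ 2 * (1125 * a ^ 4 * lam ^ 2 - 1056 * a ^ 2 * k ^ 6 * lam
            + 256 * k ^ 12)) = 0 :=
  stmt_10_general a lam k G β hGdef hβdef
end

section
/- (Trigonometric vorticity) Let a₁, a₂ ∈ ℝ, b > 0, λ, k ∈ ℝ with k > 0. Define β(p) = λ + 2a₁sin(bp)/b + 2a₂(cos(bp) − 1)/b and G(p) = β(p) + 4k²/b². Then 2βGG'' − β(G')² + β'GG' − 2β''G² − 4k²G² + 4z = 0 holds with z = (k²/b⁴)·[(4k² + λb²)² − 4a₂b(4k² + λb²) − 4a₁²b²]. -/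
/-!
`β` is a sinusoid of frequency `b` about the centre `C = λ - 2a₂/b`, so it solves
`β'' = -b²(β - C)` and has the conserved energy `β'² + b²(β - C)² = 4(a₁² + a₂²)`.
Since `G = β + K` with `K = 4k²/b²`, we have `G' = β'`, `G'' = β''` and `Kb² = 4k²`; eliminating
`β''` and `β'²` with these two relations collapses the left-hand side to the constant
`K(4(a₁² + a₂²) - b²(K + C)²)`, which is exactly `-4z`.
-/

open Real

noncomputable def sinusoid (C U V b x : ℝ) : ℝ := C + U * sin (b * x) + V * cos (b * x)

theorem hasDerivAt_sinusoid (C U V b x : ℝ) :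
    HasDerivAt (sinusoid C U V b) (sinusoid 0 (-(b * V)) (b * U) b x) x := by
  have hbx : HasDerivAt (fun y => b * y) b x := by simpa using (hasDerivAt_id x).const_mul b
  have h : HasDerivAt (sinusoid C U V b) (U * (cos (b * x) * b) + V * (-sin (b * x) * b)) x :=
    (((hbx.sin).const_mul U).const_add C).add ((hbx.cos).const_mul V)
  convert h using 1
  simp only [sinusoid]
  ring

theorem deriv_sinusoid (C U V b : ℝ) :
    deriv (sinusoid C U V b) = sinusoid 0 (-(b * V)) (b * U) b :=
  funext fun x => (hasDerivAt_sinusoid C U V b x).deriv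

theorem deriv_deriv_sinusoid (C U V b x : ℝ) :
    deriv (deriv (sinusoid C U V b)) x = -b ^ 2 * (sinusoid C U V b x - C) := by
  rw [deriv_sinusoid, deriv_sinusoid]
  simp only [sinusoid]
  ring

theorem deriv_sinusoid_sq_add (C U V b x : ℝ) :
    deriv (sinusoid C U V b) x ^ 2 + b ^ 2 * (sinusoid C U V b x - C) ^ 2
      = b ^ 2 * (U ^ 2 + V ^ 2) := by
  rw [deriv_sinusoid]
  simp only [sinusoid]
  linear_combination b ^ 2 * (U ^ 2 + V ^ 2) * sin_sq_add_cos_sq (b * x)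

theorem vorticity_expr_eq_of_harmonic {β β' β'' K C E ω : ℝ}
    (hβ'' : β'' = -ω ^ 2 * (β - C)) (hE : β' ^ 2 + ω ^ 2 * (β - C) ^ 2 = E) :
    2 * β * (β + K) * β'' - β * β' ^ 2 + β' * (β + K) * β' - 2 * β'' * (β + K) ^ 2
      - K * ω ^ 2 * (β + K) ^ 2 = K * (E - ω ^ 2 * (K + C) ^ 2) := by
  subst hβ'' hE
  ring

theorem stmt_14_general (a₁ a₂ b lam k : ℝ) (hb : 0 < b)
    (G β : ℝ → ℝ)
    (hβdef : ∀ p, β p = lam + 2 * a₁ * Real.sin (b * p) / b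
        + 2 * a₂ * (Real.cos (b * p) - 1) / b)
    (hGdef : ∀ p, G p = β p + 4 * k ^ 2 / b ^ 2) :
    ∀ p : ℝ,
      2 * β p * G p * deriv (deriv G) p - β p * (deriv G p) ^ 2
        + deriv β p * G p * deriv G p - 2 * deriv (deriv β) p * (G p) ^ 2
        - 4 * k ^ 2 * (G p) ^ 2
        + 4 * (k ^ 2 / b ^ 4 * ((4 * k ^ 2 + lam * b ^ 2) ^ 2
            - 4 * a₂ * b * (4 * k ^ 2 + lam * b ^ 2) - 4 * a₁ ^ 2 * b ^ 2)) = 0 := by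
  intro p
  set K := 4 * k ^ 2 / b ^ 2
  set C := lam - 2 * a₂ / b
  have hb0 : b ≠ 0 := hb.ne'
  have hβ : β = sinusoid C (2 * a₁ / b) (2 * a₂ / b) b := by
    funext x
    rw [hβdef, sinusoid]
    ring
  have hG : G = fun x => β x + K := funext hGdef
  have hG' : deriv G = deriv β := by rw [hG]; exact funext fun x => deriv_add_const K
  have hβ'' : deriv (deriv β) p = -b ^ 2 * (β p - C) := by
    rw [hβ]; exact deriv_deriv_sinusoid C _ _ b p
  have hE : deriv β p ^ 2 + b ^ 2 * (β p - C) ^ 2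
      = b ^ 2 * ((2 * a₁ / b) ^ 2 + (2 * a₂ / b) ^ 2) := by
    rw [hβ]; exact deriv_sinusoid_sq_add C _ _ b p
  have key := vorticity_expr_eq_of_harmonic (K := K) hβ'' hE
  have hz : 4 * (k ^ 2 / b ^ 4 * ((4 * k ^ 2 + lam * b ^ 2) ^ 2
      - 4 * a₂ * b * (4 * k ^ 2 + lam * b ^ 2) - 4 * a₁ ^ 2 * b ^ 2))
      = -(K * (b ^ 2 * ((2 * a₁ / b) ^ 2 + (2 * a₂ / b) ^ 2) - b ^ 2 * (K + C) ^ 2)) := by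
    simp only [K, C]
    field_simp
    ring
  have hKb : K * b ^ 2 = 4 * k ^ 2 := by simp only [K]; field_simp
  rw [hG', hGdef, hz, ← hKb]
  linear_combination key

/-- Trigonometric vorticity: with the trigonometric `β` and `G = β + 4k²/b²`,
the constraint holds with `z = (k²/b⁴)[(4k² + λb²)² − 4a₂b(4k² + λb²) − 4a₁²b²]`. -/
theorem stmt_14 (a₁ a₂ b lam k : ℝ) (hb : 0 < b) (hk : 0 < k)
    (G β : ℝ → ℝ)
    (hβdef : ∀ p, β p = lam + 2 * a₁ * Real.sin (b * p) / b
        + 2 * a₂ * (Real.cos (b * p) - 1) / b)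
    (hGdef : ∀ p, G p = β p + 4 * k ^ 2 / b ^ 2) :
    ∀ p : ℝ,
      2 * β p * G p * deriv (deriv G) p - β p * (deriv G p) ^ 2
        + deriv β p * G p * deriv G p - 2 * deriv (deriv β) p * (G p) ^ 2
        - 4 * k ^ 2 * (G p) ^ 2
        + 4 * (k ^ 2 / b ^ 4 * ((4 * k ^ 2 + lam * b ^ 2) ^ 2
            - 4 * a₂ * b * (4 * k ^ 2 + lam * b ^ 2) - 4 * a₁ ^ 2 * b ^ 2)) = 0 :=
  stmt_14_general a₁ a₂ b lam k hb G β hβdef hGdef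
end

section
/- (Hyperbolic vorticity) Let a₁, a₂ ∈ ℝ, b > 0, λ, k ∈ ℝ with k > 0. Define β(p) = λ + 2a₁sinh(bp)/b + 2a₂(1 − cosh(bp))/b and G(p) = β(p) − 4k²/b². Then 2βGG'' − β(G')² + β'GG' − 2β''G² − 4k²G² + 4z = 0 holds with z = (k²/b⁴)·[(4k² − λb²)² − 4a₂b(4k² − λb²) + 4a₁²b²]. -/
/-!
The hyperbolic `β` solves the linear equation `β'' = b²β − (λb² + 2a₂b)` and, since
`cosh² − sinh² = 1`, has the first integral `b²β'² − β''² = 4b²(a₁² − a₂²)`. As `G` differs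
from `β` by a constant, `G' = β'` and `G'' = β''`; eliminating `β''` and `β'²` with these two
relations turns the constraint into a polynomial identity in `β`.
-/

open Real

noncomputable def hyperbolicBeta (lam a₁ a₂ b p : ℝ) : ℝ :=
  lam + 2 * a₁ * sinh (b * p) / b + 2 * a₂ * (1 - cosh (b * p)) / b

section HyperbolicBeta

variable {lam a₁ a₂ b : ℝ}

theorem hasDerivAt_hyperbolicBeta (hb : b ≠ 0) (p : ℝ) :
    HasDerivAt (hyperbolicBeta lam a₁ a₂ b)
      (2 * a₁ * cosh (b * p) - 2 * a₂ * sinh (b * p)) p := by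
  have hbp : HasDerivAt (fun p : ℝ => b * p) b p := hasDerivAt_const_mul b
  have hsinh := ((hbp.sinh.const_mul (2 * a₁)).div_const b).const_add lam
  have hcosh := ((hbp.cosh.const_sub 1).const_mul (2 * a₂)).div_const b
  refine (hsinh.add hcosh).congr_deriv ?_
  field_simp
  ring

theorem deriv_hyperbolicBeta (hb : b ≠ 0) :
    deriv (hyperbolicBeta lam a₁ a₂ b) =
      fun p => 2 * a₁ * cosh (b * p) - 2 * a₂ * sinh (b * p) :=
  funext fun p => (hasDerivAt_hyperbolicBeta hb p).deriv

theorem deriv_deriv_hyperbolicBeta (hb : b ≠ 0) (p : ℝ) :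
    deriv (deriv (hyperbolicBeta lam a₁ a₂ b)) p =
      b * (2 * a₁ * sinh (b * p) - 2 * a₂ * cosh (b * p)) := by
  have hbp : HasDerivAt (fun p : ℝ => b * p) b p := hasDerivAt_const_mul b
  rw [deriv_hyperbolicBeta hb]
  refine HasDerivAt.deriv <|
    ((hbp.cosh.const_mul (2 * a₁)).sub (hbp.sinh.const_mul (2 * a₂))).congr_deriv ?_
  ring

theorem deriv_deriv_hyperbolicBeta_eq_sq_mul_sub (hb : b ≠ 0) (p : ℝ) :
    deriv (deriv (hyperbolicBeta lam a₁ a₂ b)) p =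
      b ^ 2 * hyperbolicBeta lam a₁ a₂ b p - (lam * b ^ 2 + 2 * a₂ * b) := by
  rw [deriv_deriv_hyperbolicBeta hb, hyperbolicBeta]
  field_simp
  ring

theorem sq_deriv_hyperbolicBeta_sub_sq_deriv_deriv (hb : b ≠ 0) (p : ℝ) :
    b ^ 2 * deriv (hyperbolicBeta lam a₁ a₂ b) p ^ 2
        - deriv (deriv (hyperbolicBeta lam a₁ a₂ b)) p ^ 2 =
      4 * b ^ 2 * (a₁ ^ 2 - a₂ ^ 2) := by
  rw [deriv_deriv_hyperbolicBeta hb, deriv_hyperbolicBeta hb]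
  linear_combination 4 * b ^ 2 * (a₁ ^ 2 - a₂ ^ 2) * cosh_sq_sub_sinh_sq (b * p)

end HyperbolicBeta

theorem vorticity_constraint_of_first_integral {a₁ a₂ b lam k B B₁ B₂ : ℝ} (hb : b ≠ 0)
    (hB₂ : B₂ = b ^ 2 * B - (lam * b ^ 2 + 2 * a₂ * b))
    (hB₁ : b ^ 2 * B₁ ^ 2 - B₂ ^ 2 = 4 * b ^ 2 * (a₁ ^ 2 - a₂ ^ 2)) :
    2 * B * (B - 4 * k ^ 2 / b ^ 2) * B₂ - B * B₁ ^ 2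
        + B₁ * (B - 4 * k ^ 2 / b ^ 2) * B₁ - 2 * B₂ * (B - 4 * k ^ 2 / b ^ 2) ^ 2
        - 4 * k ^ 2 * (B - 4 * k ^ 2 / b ^ 2) ^ 2
        + 4 * (k ^ 2 / b ^ 4 * ((4 * k ^ 2 - lam * b ^ 2) ^ 2
            - 4 * a₂ * b * (4 * k ^ 2 - lam * b ^ 2) + 4 * a₁ ^ 2 * b ^ 2)) = 0 := by
  subst hB₂
  field_simp
  linear_combination (-4 * k ^ 2) * hB₁

theorem stmt_16_general (a₁ a₂ b lam k : ℝ) (hb : 0 < b)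
    (G β : ℝ → ℝ)
    (hβdef : ∀ p, β p = lam + 2 * a₁ * Real.sinh (b * p) / b
        + 2 * a₂ * (1 - Real.cosh (b * p)) / b)
    (hGdef : ∀ p, G p = β p - 4 * k ^ 2 / b ^ 2) :
    ∀ p : ℝ,
      2 * β p * G p * deriv (deriv G) p - β p * (deriv G p) ^ 2
        + deriv β p * G p * deriv G p - 2 * deriv (deriv β) p * (G p) ^ 2
        - 4 * k ^ 2 * (G p) ^ 2
        + 4 * (k ^ 2 / b ^ 4 * ((4 * k ^ 2 - lam * b ^ 2) ^ 2
            - 4 * a₂ * b * (4 * k ^ 2 - lam * b ^ 2) + 4 * a₁ ^ 2 * b ^ 2)) = 0 := by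
  have hβ : β = hyperbolicBeta lam a₁ a₂ b := funext hβdef
  have hG : G = fun p => β p - 4 * k ^ 2 / b ^ 2 := funext hGdef
  have hG' : deriv G = deriv β := by
    funext p
    rw [hG, deriv_sub_const]
  intro p
  rw [hGdef p, hG']
  subst hβ
  exact vorticity_constraint_of_first_integral hb.ne'
    (deriv_deriv_hyperbolicBeta_eq_sq_mul_sub hb.ne' p)
    (sq_deriv_hyperbolicBeta_sub_sq_deriv_deriv hb.ne' p)

/-- Hyperbolic vorticity: with the hyperbolic `β` and `G = β − 4k²/b²`,
the constraint holds with `z = (k²/b⁴)[(4k² − λb²)² − 4a₂b(4k² − λb²) + 4a₁²b²]`. -/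
theorem stmt_16 (a₁ a₂ b lam k : ℝ) (hb : 0 < b) (hk : 0 < k)
    (G β : ℝ → ℝ)
    (hβdef : ∀ p, β p = lam + 2 * a₁ * Real.sinh (b * p) / b
        + 2 * a₂ * (1 - Real.cosh (b * p)) / b)
    (hGdef : ∀ p, G p = β p - 4 * k ^ 2 / b ^ 2) :
    ∀ p : ℝ,
      2 * β p * G p * deriv (deriv G) p - β p * (deriv G p) ^ 2
        + deriv β p * G p * deriv G p - 2 * deriv (deriv β) p * (G p) ^ 2
        - 4 * k ^ 2 * (G p) ^ 2
        + 4 * (k ^ 2 / b ^ 4 * ((4 * k ^ 2 - lam * b ^ 2) ^ 2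
            - 4 * a₂ * b * (4 * k ^ 2 - lam * b ^ 2) + 4 * a₁ ^ 2 * b ^ 2)) = 0 :=
  stmt_16_general a₁ a₂ b lam k hb G β hβdef hGdef
end
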